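/- Let Σ_m be a real n×n positive semidefinite matrix, Φ a real ℓ×n matrix with rank(Σ_m^{1/2}·Φᵀ·Φ·Σ_m^{1/2}) = rank(Σ_m), and μ ∈ range(Σ_m). For σ² > 0 define W_m(σ²) := Σ_m·Φᵀ·(σ²·I_ℓ + Φ·Σ_m·Φᵀ)⁻¹. Then lim_{σ²→0⁺} tr((μ·μᵀ)·Φᵀ·W_m(σ²)ᵀ) = ‖μ‖², i.e., the inner product ⟨W_m(σ²)·Φ·μ, μ⟩ tends to ‖μ‖² as σ² → 0⁺. -/

import Mathlib

open Matrix Filter Topology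

/-- The positive semidefinite square root of a positive semidefinite matrix
(the definition of `Matrix.PosSemidef.sqrt` in Mathlib of December 2024, since removed). -/
noncomputable def Matrix.PosSemidef.sqrt {n 𝕜 : Type*} [Fintype n] [DecidableEq n] [RCLike 𝕜]
    [PartialOrder 𝕜]
    {A : Matrix n n 𝕜} (hA : A.PosSemidef) : Matrix n n 𝕜 :=
  (hA.1.eigenvectorUnitary : Matrix n n 𝕜) *
    diagonal (((↑) : ℝ → 𝕜) ∘ (√·) ∘ hA.1.eigenvalues) *
    (star hA.1.eigenvectorUnitary : Matrix n n 𝕜)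

/-!
Write `R = Σ^{1/2}`, `A = Φ R` and `M = AᵀA`. By the push-through identity
`Aᵀ (σ + AAᵀ)⁻¹ = (σ + M)⁻¹ Aᵀ`, the product `W(σ) Φ Σ` equals `R (σ + M)⁻¹ M R`, so for
`μ = Σ v = R w` (with `w = R v`) the quantity is `⟨μ, R (σ + M)⁻¹ M w⟩`.
Since `(σ + M)⁻¹ M = 1 - σ (σ + M)⁻¹` and `‖σ (σ + M)⁻¹‖` stays bounded for positive
semidefinite `M`, the map `(σ + M)⁻¹ M` tends to the identity on `range M` as `σ → 0⁺`.
The rank hypothesis says that `range M = range R ∋ w`, so the quantity tends to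
`⟨μ, R w⟩ = ‖μ‖²`.
-/

namespace Matrix

variable {ι : Type*} [Fintype ι]

theorem range_mulVecLin_mul_eq_of_rank_eq {κ K : Type*} [Fintype κ] [Field K]
    {A : Matrix ι κ K} (B : Matrix κ ι K) (h : (A * B).rank = A.rank) :
    LinearMap.range (A * B).mulVecLin = LinearMap.range A.mulVecLin := by
  refine Submodule.eq_of_le_of_finrank_eq ?_ h
  rw [mulVecLin_mul]
  exact LinearMap.range_comp_le_range _ _

theorem trace_vecMulVec_mul_transpose {κ α : Type*} [Fintype κ] [CommSemiring α]
    (x : ι → α) (K : Matrix κ ι α) (L : Matrix ι κ α) :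
    (vecMulVec x x * Kᵀ * Lᵀ).trace = x ⬝ᵥ (L * K) *ᵥ x := by
  rw [Matrix.mul_assoc, vecMulVec_mul, trace_vecMulVec, ← transpose_mul, vecMul_transpose]

theorem _root_.norm_le_sqrt_dotProduct_self (x : ι → ℝ) : ‖x‖ ≤ √(x ⬝ᵥ x) :=
  (pi_norm_le_iff_of_nonneg (Real.sqrt_nonneg _)).mpr fun i =>
    Real.abs_le_sqrt <| by
      simpa only [dotProduct, ← sq] using
        Finset.single_le_sum (fun j _ => sq_nonneg (x j)) (Finset.mem_univ i)

theorem posSemidef_transpose_mul_self {κ : Type*} [Fintype κ] (A : Matrix κ ι ℝ) :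
    (Aᵀ * A).PosSemidef := by
  simpa only [conjTranspose_eq_transpose_of_trivial] using posSemidef_conjTranspose_mul_self A

theorem posSemidef_self_mul_transpose {κ : Type*} [Fintype κ] (A : Matrix κ ι ℝ) :
    (A * Aᵀ).PosSemidef := by
  simpa only [conjTranspose_eq_transpose_of_trivial] using posSemidef_self_mul_conjTranspose A

variable [DecidableEq ι]

theorem inv_smul_one_add_mul {K : Type*} [CommRing K] {M : Matrix ι ι K} {σ : K}
    (h : IsUnit (σ • (1 : Matrix ι ι K) + M).det) :
    (σ • (1 : Matrix ι ι K) + M)⁻¹ * M = 1 - σ • (σ • (1 : Matrix ι ι K) + M)⁻¹ := by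
  calc (σ • (1 : Matrix ι ι K) + M)⁻¹ * M
      = (σ • (1 : Matrix ι ι K) + M)⁻¹ * (σ • 1 + M - σ • 1) := by rw [add_sub_cancel_left]
    _ = _ := by rw [Matrix.mul_sub, nonsing_inv_mul _ h, Matrix.mul_smul, Matrix.mul_one]

theorem mul_inv_smul_one_add_mul_comm {κ K : Type*} [Fintype κ] [DecidableEq κ] [CommRing K]
    (A : Matrix κ ι K) (B : Matrix ι κ K) {σ : K}
    (hAB : IsUnit (σ • (1 : Matrix κ κ K) + A * B).det)
    (hBA : IsUnit (σ • (1 : Matrix ι ι K) + B * A).det) :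
    B * (σ • (1 : Matrix κ κ K) + A * B)⁻¹ = (σ • (1 : Matrix ι ι K) + B * A)⁻¹ * B := by
  have h : (σ • (1 : Matrix ι ι K) + B * A) * B = B * (σ • (1 : Matrix κ κ K) + A * B) := by
    simp only [Matrix.add_mul, Matrix.mul_add, Matrix.smul_mul, Matrix.mul_smul,
      Matrix.one_mul, Matrix.mul_one, Matrix.mul_assoc]
  calc B * (σ • (1 : Matrix κ κ K) + A * B)⁻¹
      = (σ • 1 + B * A)⁻¹ * ((σ • 1 + B * A) * B) * (σ • (1 : Matrix κ κ K) + A * B)⁻¹ := by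
        rw [← Matrix.mul_assoc, nonsing_inv_mul _ hBA, Matrix.one_mul]
    _ = _ := by rw [h, ← Matrix.mul_assoc, mul_nonsing_inv_cancel_right _ _ hAB]

theorem PosSemidef.sqrt_mul_sqrt {A : Matrix ι ι ℝ} (hA : A.PosSemidef) :
    hA.sqrt * hA.sqrt = A := by
  conv_rhs => rw [hA.1.spectral_theorem, Unitary.conjStarAlgAut_apply]
  set U : Matrix ι ι ℝ := ↑hA.1.eigenvectorUnitary
  have hU : star U * U = 1 := Unitary.coe_star_mul_self _
  calc hA.sqrt * hA.sqrt
      = U * (diagonal (RCLike.ofReal ∘ (√·) ∘ hA.1.eigenvalues) * (star U * U) *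
          diagonal (RCLike.ofReal ∘ (√·) ∘ hA.1.eigenvalues)) * star U := by
        simp only [PosSemidef.sqrt, U, Matrix.mul_assoc]
    _ = _ := by
      rw [hU, Matrix.mul_one, diagonal_mul_diagonal]
      congr 3
      ext i
      simp [Real.mul_self_sqrt (hA.eigenvalues_nonneg i)]

theorem PosSemidef.posSemidef_sqrt {A : Matrix ι ι ℝ} (hA : A.PosSemidef) :
    hA.sqrt.PosSemidef := by
  have hD : (diagonal ((RCLike.ofReal : ℝ → ℝ) ∘ (√·) ∘ hA.1.eigenvalues)).PosSemidef :=
    posSemidef_diagonal_iff.mpr fun i => by simp [Real.sqrt_nonneg]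
  simpa only [PosSemidef.sqrt, Unitary.coe_star, star_eq_conjTranspose] using
    hD.mul_mul_conjTranspose_same (hA.1.eigenvectorUnitary : Matrix ι ι ℝ)

theorem PosSemidef.transpose_sqrt {A : Matrix ι ι ℝ} (hA : A.PosSemidef) :
    hA.sqrtᵀ = hA.sqrt :=
  (conjTranspose_eq_transpose_of_trivial _).symm.trans hA.posSemidef_sqrt.isHermitian

theorem PosSemidef.rank_sqrt {A : Matrix ι ι ℝ} (hA : A.PosSemidef) :
    hA.sqrt.rank = A.rank := by
  conv_rhs => rw [← hA.sqrt_mul_sqrt]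
  rw [← rank_transpose_mul_self, hA.transpose_sqrt]

theorem PosSemidef.isUnit_det_smul_one_add {M : Matrix ι ι ℝ} (hM : M.PosSemidef) {σ : ℝ}
    (hσ : 0 < σ) : IsUnit (σ • (1 : Matrix ι ι ℝ) + M).det :=
  (isUnit_iff_isUnit_det _).mp ((PosDef.one.smul hσ).add_posSemidef hM).isUnit

theorem PosSemidef.sq_mul_dotProduct_self_le {M : Matrix ι ι ℝ} (hM : M.PosSemidef) {σ : ℝ}
    (hσ : 0 ≤ σ) (y : ι → ℝ) :
    σ ^ 2 * (y ⬝ᵥ y) ≤ ((σ • 1 + M) *ᵥ y) ⬝ᵥ ((σ • 1 + M) *ᵥ y) := by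
  have hMy : 0 ≤ y ⬝ᵥ M *ᵥ y := by simpa using hM.dotProduct_mulVec_nonneg y
  have hMyMy : 0 ≤ (M *ᵥ y) ⬝ᵥ (M *ᵥ y) := Finset.sum_nonneg fun i _ => mul_self_nonneg _
  simp only [add_mulVec, smul_mulVec, one_mulVec, add_dotProduct, dotProduct_add,
    smul_dotProduct, dotProduct_smul, smul_eq_mul, dotProduct_comm (M *ᵥ y) y]
  nlinarith [mul_nonneg hσ hMy]

theorem PosSemidef.norm_smul_inv_smul_one_add_mulVec_le {M : Matrix ι ι ℝ} (hM : M.PosSemidef)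
    {σ : ℝ} (hσ : 0 < σ) (z : ι → ℝ) :
    ‖σ • ((σ • 1 + M)⁻¹ *ᵥ z)‖ ≤ √(z ⬝ᵥ z) := by
  set y := (σ • 1 + M)⁻¹ *ᵥ z
  have hy : (σ • 1 + M) *ᵥ y = z := by
    rw [mulVec_mulVec, mul_nonsing_inv _ (hM.isUnit_det_smul_one_add hσ), one_mulVec]
  calc ‖σ • y‖ ≤ √((σ • y) ⬝ᵥ (σ • y)) := norm_le_sqrt_dotProduct_self _
    _ = √(σ ^ 2 * (y ⬝ᵥ y)) := by
      rw [smul_dotProduct, dotProduct_smul, smul_eq_mul, smul_eq_mul, ← mul_assoc, sq]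
    _ ≤ √(z ⬝ᵥ z) := Real.sqrt_le_sqrt (hy ▸ hM.sq_mul_dotProduct_self_le hσ.le y)

theorem PosSemidef.tendsto_inv_smul_one_add_mul_mulVec {M : Matrix ι ι ℝ}
    (hM : M.PosSemidef) {y : ι → ℝ} (hy : y ∈ LinearMap.range M.mulVecLin) :
    Tendsto (fun σ : ℝ => ((σ • 1 + M)⁻¹ * M) *ᵥ y) (𝓝[>] 0) (𝓝 y) := by
  obtain ⟨u, rfl⟩ := hy
  set r : ℝ → Matrix ι ι ℝ := fun σ => σ • (σ • 1 + M)⁻¹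
  have hres : ∀ σ > 0, ((σ • 1 + M)⁻¹ * M) = 1 - r σ := fun σ hσ =>
    inv_smul_one_add_mul (hM.isUnit_det_smul_one_add hσ)
  have herr : ∀ σ > 0, ((σ • 1 + M)⁻¹ * M) *ᵥ (M *ᵥ u) =
      M *ᵥ u - σ • (u - r σ *ᵥ u) := fun σ hσ => by
    have hrM : r σ * M = σ • (1 - r σ) := by rw [Matrix.smul_mul, hres σ hσ]
    rw [hres σ hσ, sub_mulVec, one_mulVec, mulVec_mulVec, hrM, smul_mulVec, sub_mulVec,
      one_mulVec]
  have hbdd : IsBoundedUnder (· ≤ ·) (𝓝[>] (0 : ℝ)) (fun σ => ‖u - r σ *ᵥ u‖) := by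
    refine isBoundedUnder_of_eventually_le (a := ‖u‖ + √(u ⬝ᵥ u)) ?_
    filter_upwards [self_mem_nhdsWithin] with σ hσ
    refine (norm_sub_le _ _).trans ?_
    gcongr
    simpa [r, smul_mulVec] using hM.norm_smul_inv_smul_one_add_mulVec_le hσ u
  have hsmall : Tendsto (fun σ : ℝ => σ • (u - r σ *ᵥ u)) (𝓝[>] 0) (𝓝 0) :=
    (tendsto_nhdsWithin_of_tendsto_nhds tendsto_id).zero_smul_isBoundedUnder_le hbdd
  have hlim : Tendsto (fun σ : ℝ => M *ᵥ u - σ • (u - r σ *ᵥ u)) (𝓝[>] 0) (𝓝 (M *ᵥ u)) := by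
    simpa using tendsto_const_nhds.sub hsmall
  refine hlim.congr' ?_
  filter_upwards [self_mem_nhdsWithin] with σ hσ
  exact (herr σ hσ).symm

theorem mul_transpose_mul_inv_smul_one_add_mul {κ : Type*} [Fintype κ]
    [DecidableEq κ] {R : Matrix ι ι ℝ} (hR : Rᵀ = R) (Φ : Matrix κ ι ℝ) {σ : ℝ} (hσ : 0 < σ) :
    R * R * Φᵀ * (σ • 1 + Φ * (R * R) * Φᵀ)⁻¹ * Φ * (R * R) =
      R * ((σ • 1 + (Φ * R)ᵀ * (Φ * R))⁻¹ * ((Φ * R)ᵀ * (Φ * R))) * R := by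
  set A := Φ * R
  have hA : Aᵀ = R * Φᵀ := by rw [transpose_mul, hR]
  have hΦRRΦ : Φ * (R * R) * Φᵀ = A * Aᵀ := by simp only [hA, A, Matrix.mul_assoc]
  have hRRΦ : R * R * Φᵀ = R * Aᵀ := by rw [hA, Matrix.mul_assoc]
  rw [hΦRRΦ, hRRΦ, Matrix.mul_assoc R, mul_inv_smul_one_add_mul_comm A Aᵀ
    ((posSemidef_self_mul_transpose A).isUnit_det_smul_one_add hσ)
    ((posSemidef_transpose_mul_self A).isUnit_det_smul_one_add hσ)]
  simp only [A, Matrix.mul_assoc]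

end Matrix

/-- If rank(Σ_m^{1/2}·Φᵀ·Φ·Σ_m^{1/2}) = rank(Σ_m) and μ ∈ range(Σ_m), then,
with W_m(σ²) = Σ_m·Φᵀ·(σ²·I + Φ·Σ_m·Φᵀ)⁻¹, tr((μ·μᵀ)·Φᵀ·W_m(σ²)ᵀ) → ‖μ‖² = μ ⬝ μ as
σ² → 0⁺. -/
theorem stmt_16 {n l : ℕ} (Sm : Matrix (Fin n) (Fin n) ℝ) (hSm : Sm.PosSemidef)
    (Φ : Matrix (Fin l) (Fin n) ℝ)
    (hrank : (hSm.sqrt * Φᵀ * Φ * hSm.sqrt).rank = Sm.rank)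
    (μ : Fin n → ℝ) (hμ : μ ∈ LinearMap.range Sm.mulVecLin)
    (W : ℝ → Matrix (Fin n) (Fin l) ℝ)
    (hW : ∀ σ2 : ℝ, W σ2 = Sm * Φᵀ * (σ2 • (1 : Matrix (Fin l) (Fin l) ℝ) + Φ * Sm * Φᵀ)⁻¹) :
    Tendsto (fun σ2 : ℝ => (Matrix.vecMulVec μ μ * Φᵀ * (W σ2)ᵀ).trace)
      (nhdsWithin 0 (Set.Ioi 0)) (nhds (μ ⬝ᵥ μ)) := by
  set R := hSm.sqrt
  have hS : Sm = R * R := hSm.sqrt_mul_sqrt.symm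
  have hRt : Rᵀ = R := hSm.transpose_sqrt
  have hRrank : R.rank = Sm.rank := hSm.rank_sqrt
  clear_value R
  set M := (Φ * R)ᵀ * (Φ * R)
  have hMpsd : M.PosSemidef := posSemidef_transpose_mul_self (Φ * R)
  obtain ⟨v, rfl⟩ := hμ
  have hw : R *ᵥ v ∈ LinearMap.range M.mulVecLin := by
    have hRM : R * (Φᵀ * Φ * R) = M := by simp only [M, transpose_mul, hRt, Matrix.mul_assoc]
    have hrank' : (R * (Φᵀ * Φ * R)).rank = R.rank := by
      rw [hRrank, ← hrank]; simp only [Matrix.mul_assoc]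
    rw [← hRM, range_mulVecLin_mul_eq_of_rank_eq _ hrank']
    exact ⟨v, rfl⟩
  have hcont : Continuous fun x => Sm *ᵥ v ⬝ᵥ R *ᵥ x :=
    continuous_const.dotProduct (continuous_const.matrix_mulVec continuous_id)
  have hlim := (hcont.tendsto _).comp (hMpsd.tendsto_inv_smul_one_add_mul_mulVec hw)
  rw [Function.comp_def, mulVec_mulVec, ← hS] at hlim
  refine hlim.congr' ?_
  filter_upwards [self_mem_nhdsWithin] with σ hσ
  rw [mulVecLin_apply, trace_vecMulVec_mul_transpose, mulVec_mulVec v _ Sm, hW, hS,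
    mul_transpose_mul_inv_smul_one_add_mul hRt Φ hσ]
  simp only [M, mulVec_mulVec, Matrix.mul_assoc]
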